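/- arXiv:1606.01848 — 2 statements merged into one kernel-verified Lean document; each statement's English description precedes it below -/
import Mathlib

section
/- If the graph n·K̄₂ + m·K₁ is a subgraph of a finite simple graph G, then Ξ(G) ≥ 2n + m; that is, any faithful orthogonal representation of G requires dimension at least 2n + m. -/
/-!
Vertices in different parts of `n·K̄₂ + m·K₁` are adjacent, so in an orthogonal representation the
subspaces spanned by the parts are pairwise orthogonal, hence independent. A `K̄₂` part spans a
plane (its two lines are distinct) and a `K₁` part a line, so `2n + m ≤ d`.

The bound on `Ξ(G) = sInf {d | HasFOR G d}` also needs some faithful representation to exist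
(`sInf ∅ = 0`): the vectors `e_v + (row v of the incidence matrix of Gᶜ)` are independent, and for
`u ≠ v` their inner product counts the common non-edges, i.e. it is `1` if `uv` is a non-edge and
`0` otherwise.
-/

open Module

/-- An orthogonal representation (OR) of a simple graph `G` in `ℂ^d`: an injective map from the
vertices of `G` to one-dimensional subspaces of `ℂ^d` such that adjacent vertices are mapped to
orthogonal subspaces. -/
def IsOrthRep {V : Type*} (G : SimpleGraph V) (d : ℕ)
    (φ : V → Submodule ℂ (EuclideanSpace ℂ (Fin d))) : Prop :=
  Function.Injective φ ∧ (∀ v, Module.finrank ℂ (φ v) = 1) ∧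
    ∀ u v : V, G.Adj u v → φ u ≤ (φ v)ᗮ

/-- A faithful orthogonal representation (FOR) of a simple graph `G` in `ℂ^d`: an injective map
from the vertices of `G` to one-dimensional subspaces of `ℂ^d` such that two distinct vertices
are adjacent if and only if their images are orthogonal subspaces. -/
def IsFaithfulOrthRep {V : Type*} (G : SimpleGraph V) (d : ℕ)
    (φ : V → Submodule ℂ (EuclideanSpace ℂ (Fin d))) : Prop :=
  Function.Injective φ ∧ (∀ v, Module.finrank ℂ (φ v) = 1) ∧
    ∀ u v : V, u ≠ v → (G.Adj u v ↔ φ u ≤ (φ v)ᗮ)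

/-- `G` admits an orthogonal representation in `ℂ^d`. -/
def HasOR {V : Type*} (G : SimpleGraph V) (d : ℕ) : Prop := ∃ φ, IsOrthRep G d φ

/-- `G` admits a faithful orthogonal representation in `ℂ^d`. -/
def HasFOR {V : Type*} (G : SimpleGraph V) (d : ℕ) : Prop := ∃ φ, IsFaithfulOrthRep G d φ

/-- `ξ(G)`: the smallest dimension `d` such that `G` admits an orthogonal representation
in `ℂ^d`. -/
noncomputable def xi {V : Type*} (G : SimpleGraph V) : ℕ := sInf {d | HasOR G d}

/-- `Ξ(G)`: the smallest dimension `d` such that `G` admits a faithful orthogonal representation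
in `ℂ^d`. -/
noncomputable def Xi {V : Type*} (G : SimpleGraph V) : ℕ := sInf {d | HasFOR G d}

/-- A `b`-fold coloring of `G` with `a` colors: each vertex receives a set of `b` colors out of
`a` colors such that adjacent vertices receive disjoint sets. -/
def HasFoldColoring {V : Type*} (G : SimpleGraph V) (a b : ℕ) : Prop :=
  ∃ c : V → Finset (Fin a), (∀ v, (c v).card = b) ∧
    ∀ u v : V, G.Adj u v → Disjoint (c u) (c v)

/-- The fractional chromatic number `χ_f(G)`: the infimum of `a / b` over all `b`-fold
colorings of `G` with `a` colors. -/
noncomputable def fracChrom {V : Type*} (G : SimpleGraph V) : ℝ :=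
  sInf {x : ℝ | ∃ a b : ℕ, 0 < b ∧ HasFoldColoring G a b ∧ x = (a : ℝ) / b}

/-- The join `G₁ + G₂` of two graphs: their disjoint union together with one additional edge
between every pair of vertices taken one from each graph. -/
def graphJoin {V₁ V₂ : Type*} (G₁ : SimpleGraph V₁) (G₂ : SimpleGraph V₂) :
    SimpleGraph (V₁ ⊕ V₂) :=
  (G₁ ⊕g G₂) ⊔ completeBipartiteGraph V₁ V₂

/-- The join `n·K̄₂ + m·K₁` of `n` copies of the two-vertex edgeless graph `K̄₂` and `m` copies
of the one-vertex graph `K₁`: the complete multipartite graph whose parts are the `n` copies of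
`K̄₂` (the fibers `{(i, 0), (i, 1)}`) and the `m` singletons. Two vertices are adjacent if and
only if they lie in different parts. -/
def multiJoin (n m : ℕ) : SimpleGraph ((Fin n × Fin 2) ⊕ Fin m) :=
  (⊤ : SimpleGraph (Fin n ⊕ Fin m)).comap (Sum.map Prod.fst id)

theorem iSupIndep.sum_finrank_le {K M ι : Type*} [DivisionRing K] [AddCommGroup M] [Module K M]
    [FiniteDimensional K M] [Fintype ι] [DecidableEq ι] {P : ι → Submodule K M}
    (hP : iSupIndep P) : ∑ i, finrank K (P i) ≤ finrank K M := by
  rw [← finrank_directSum]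
  exact LinearMap.finrank_le_finrank_of_injective hP.dfinsupp_lsum_injective

theorem Submodule.finrank_sup_eq_two {K M : Type*} [DivisionRing K] [AddCommGroup M] [Module K M]
    {A B : Submodule K M} (hA : finrank K A = 1) (hB : finrank K B = 1) (hAB : A ≠ B) :
    finrank K ↥(A ⊔ B) = 2 := by
  have : Module.Finite K A := Module.finite_of_finrank_eq_succ hA
  have : Module.Finite K B := Module.finite_of_finrank_eq_succ hB
  have hinf : A ⊓ B = ⊥ := by
    by_contra h
    have h1 : 1 ≤ finrank K ↥(A ⊓ B) := Submodule.one_le_finrank_iff.mpr h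
    exact hAB ((Submodule.eq_of_le_of_finrank_le inf_le_left (hA ▸ h1)).symm.trans
      (Submodule.eq_of_le_of_finrank_le inf_le_right (hB ▸ h1)))
  have := Submodule.finrank_sup_add_finrank_inf_eq A B
  rw [hinf, finrank_bot, hA, hB] at this
  omega

open scoped InnerProductSpace

theorem sum_finrank_iSup_fiber_le {𝕜 E W ι : Type*} [RCLike 𝕜] [NormedAddCommGroup E]
    [InnerProductSpace 𝕜 E] [FiniteDimensional 𝕜 E] [Fintype ι] (p : W → ι)
    (ψ : W → Submodule 𝕜 E) (hψ : ∀ u v, p u ≠ p v → (ψ u).IsOrtho (ψ v)) :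
    ∑ a, finrank 𝕜 ↥(⨆ (v) (_ : p v = a), ψ v) ≤ finrank 𝕜 E := by
  classical
  refine iSupIndep.sum_finrank_le (OrthogonalFamily.of_pairwise ?_).independent
  intro a b hab
  simp only [Function.onFun, Submodule.isOrtho_iSup_left, Submodule.isOrtho_iSup_right]
  rintro u rfl v rfl
  exact hψ v u hab

section OrthRep

variable {V W : Type*} {G : SimpleGraph V} {d : ℕ} {φ : V → Submodule ℂ (EuclideanSpace ℂ (Fin d))}

theorem IsFaithfulOrthRep.isOrthRep (hφ : IsFaithfulOrthRep G d φ) : IsOrthRep G d φ :=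
  ⟨hφ.1, hφ.2.1, fun u v huv => (hφ.2.2 u v huv.ne).mp huv⟩

theorem IsOrthRep.comp {H : SimpleGraph W} (hφ : IsOrthRep G d φ) (f : H →g G)
    (hf : Function.Injective f) : IsOrthRep H d (φ ∘ f) :=
  ⟨hφ.1.comp hf, fun v => hφ.2.1 (f v), fun u v huv => hφ.2.2 (f u) (f v) (f.map_rel huv)⟩

theorem IsOrthRep.two_mul_add_le_of_multiJoin {n m : ℕ}
    {ψ : (Fin n × Fin 2) ⊕ Fin m → Submodule ℂ (EuclideanSpace ℂ (Fin d))}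
    (hψ : IsOrthRep (multiJoin n m) d ψ) : 2 * n + m ≤ d := by
  set p : (Fin n × Fin 2) ⊕ Fin m → Fin n ⊕ Fin m := Sum.map Prod.fst id
  set P : Fin n ⊕ Fin m → Submodule ℂ (EuclideanSpace ℂ (Fin d)) :=
    fun a => ⨆ (v) (_ : p v = a), ψ v
  have hle : ∀ v, ψ v ≤ P (p v) := fun v => le_iSup₂_of_le v rfl le_rfl
  have hpart : ∀ a, Sum.elim (fun _ => 2) (fun _ => 1) a ≤ finrank ℂ (P a) := by
    rintro (i | j)
    · have hne : ψ (.inl (i, 0)) ≠ ψ (.inl (i, 1)) := fun h => by simpa using hψ.1 h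
      rw [Sum.elim_inl, ← Submodule.finrank_sup_eq_two (hψ.2.1 _) (hψ.2.1 _) hne]
      exact Submodule.finrank_mono (sup_le (hle _) (hle _))
    · rw [Sum.elim_inr, ← hψ.2.1 (.inr j)]
      exact Submodule.finrank_mono (hle _)
  calc 2 * n + m = ∑ a, Sum.elim (fun _ => 2) (fun _ => 1) a := by
        simp [Fintype.sum_sum_type, mul_comm]
    _ ≤ ∑ a, finrank ℂ (P a) := Finset.sum_le_sum fun a _ => hpart a
    _ ≤ finrank ℂ (EuclideanSpace ℂ (Fin d)) :=
        sum_finrank_iSup_fiber_le p ψ hψ.2.2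
    _ = d := finrank_euclideanSpace_fin

theorem hasFOR_of_linearIndependent {E : Type*} [NormedAddCommGroup E] [InnerProductSpace ℂ E]
    [FiniteDimensional ℂ E] (x : V → E) (hx : LinearIndependent ℂ x)
    (hadj : ∀ u v, u ≠ v → (G.Adj u v ↔ ⟪x u, x v⟫_ℂ = 0)) : HasFOR G (finrank ℂ E) := by
  set e := (stdOrthonormalBasis ℂ E).repr
  have hy : LinearIndependent ℂ (e ∘ x) := hx.map' e.toLinearMap e.toLinearEquiv.ker
  refine ⟨fun v => ℂ ∙ e (x v), fun u v huv => ?_, fun v => finrank_span_singleton (hy.ne_zero v),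
    fun u v huv => ?_⟩
  · by_contra hne
    refine hy.notMem_span_image (s := {v}) hne ?_
    rw [Set.image_singleton]
    have huv : ℂ ∙ e (x u) = ℂ ∙ e (x v) := huv
    exact huv ▸ Submodule.mem_span_singleton_self (e (x u))
  · rw [hadj u v huv, Submodule.span_singleton_le_iff_mem,
      Submodule.mem_orthogonal_singleton_iff_inner_left, LinearIsometryEquiv.inner_map_map]

end OrthRep

open Classical Matrix in
theorem exists_hasFOR {V : Type*} [Fintype V] (G : SimpleGraph V) : ∃ d, HasFOR G d := by
  let x : V → EuclideanSpace ℂ (V ⊕ Sym2 V) := fun v =>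
    WithLp.toLp 2 (Sum.elim (Pi.single v 1) (Gᶜ.incMatrix ℂ v))
  have hx : LinearIndependent ℂ x := by
    refine .of_comp (LinearMap.funLeft ℂ ℂ Sum.inl ∘ₗ (WithLp.linearEquiv 2 ℂ _).toLinearMap) ?_
    convert Pi.linearIndependent_single_one V ℂ
    ext
    simp [x]
  have hinner : ∀ u v, u ≠ v → ⟪x u, x v⟫_ℂ = (Gᶜ.incMatrix ℂ * (Gᶜ.incMatrix ℂ)ᵀ) u v := by
    intro u v huv
    simp [x, PiLp.inner_apply, Fintype.sum_sum_type, Matrix.mul_apply, Pi.single_apply,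
      SimpleGraph.incMatrix_apply', apply_ite (starRingEnd ℂ), huv.symm, mul_comm]
  refine ⟨_, hasFOR_of_linearIndependent x hx fun u v huv => ?_⟩
  rw [hinner u v huv, SimpleGraph.incMatrix_mul_transpose]
  simp [huv]

/-- If the graph `n·K̄₂ + m·K₁` is a subgraph of a finite simple graph `G`, then
`Ξ(G) ≥ 2n + m`; that is, any faithful orthogonal representation of `G` requires dimension at
least `2n + m`. -/
theorem stmt13 {V : Type*} [Fintype V] (G : SimpleGraph V) (n m : ℕ)
    (f : (Fin n × Fin 2) ⊕ Fin m → V) (hf : Function.Injective f)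
    (hadj : ∀ u v, (multiJoin n m).Adj u v → G.Adj (f u) (f v)) :
    2 * n + m ≤ Xi G ∧ ∀ d : ℕ, HasFOR G d → 2 * n + m ≤ d := by
  have hbound : ∀ d, HasFOR G d → 2 * n + m ≤ d := fun _ ⟨_, hφ⟩ =>
    (hφ.isOrthRep.comp ⟨f, hadj _ _⟩ hf).two_mul_add_le_of_multiJoin
  obtain ⟨d, hd⟩ := exists_hasFOR G
  exact ⟨hbound _ (Nat.sInf_mem (s := {d | HasFOR G d}) ⟨d, hd⟩), hbound⟩
end

section
/- The circulant graph Ci₈(1,2), on 8 vertices with each vertex adjacent to its first and second neighbors in both directions, satisfies Ξ(Ci₈(1,2)) = 5: it admits a faithful orthogonal representation in ℂ⁵ but none in ℂ⁴. -/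
/-!
Upper bound: eight integer vectors in `ℤ⁵` are orthogonal exactly along the edges of
`Ci₈(1,2)`. No two vertices of `Ci₈(1,2)` have the same neighbourhood, so the lines spanned by
these vectors are automatically distinct and they give a faithful orthogonal representation.

Lower bound: in `ℂ⁴` the pairwise orthogonal vectors `x₀, x₁, x₂` extend, after normalisation,
to an orthonormal basis `b₀, b₁, b₂, b₃`. In it `x₃, x₄, x₆, x₇` have the staircase shape
`(∗,0,0,∗), (∗,∗,0,∗), (0,∗,∗,∗), (0,0,∗,∗)` with `⟪x₃,b₀⟫, ⟪x₄,b₁⟫, ⟪x₆,b₂⟫, ⟪x₇,b₂⟫ ≠ 0`,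
and consecutive ones are orthogonal. This forces them to span `ℂ⁴`, so `x₅`, which is orthogonal
to all four, would vanish. Since faithful representations move up in dimension along isometric
embeddings, `Ξ = 5`.
-/

open Module

open scoped InnerProductSpace ComplexInnerProductSpace
open ComplexConjugate

local notation "Ci₈" => SimpleGraph.circulantGraph ({1, 2} : Set (ZMod 8))

section InnerProductSpace

variable {𝕜 E F : Type*} [RCLike 𝕜] [NormedAddCommGroup E] [InnerProductSpace 𝕜 E]
  [NormedAddCommGroup F] [InnerProductSpace 𝕜 F]

theorem span_singleton_le_orthogonal_singleton_iff (x y : E) :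
    (𝕜 ∙ x) ≤ (𝕜 ∙ y)ᗮ ↔ ⟪x, y⟫_𝕜 = 0 := by
  rw [Submodule.span_singleton_le_iff_mem, Submodule.mem_orthogonal_singleton_iff_inner_left]

theorem exists_linearIsometry_of_finrank_le [FiniteDimensional 𝕜 E] [FiniteDimensional 𝕜 F]
    (h : finrank 𝕜 E ≤ finrank 𝕜 F) : Nonempty (E →ₗᵢ[𝕜] F) := by
  let b := stdOrthonormalBasis 𝕜 E
  let b' := stdOrthonormalBasis 𝕜 F
  refine ⟨(b.toBasis.constr 𝕜 (b' ∘ Fin.castLE h)).isometryOfOrthonormal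
    (v := b.toBasis) (by simp [b.orthonormal]) ?_⟩
  convert b'.orthonormal.comp _ (Fin.castLE_injective h)
  ext i
  simp

theorem inner_gramSchmidtOrthonormalBasis_eq_zero_iff {ι : Type*} [LinearOrder ι]
    [LocallyFiniteOrderBot ι] [WellFoundedLT ι] [Fintype ι] [FiniteDimensional 𝕜 E]
    (h : finrank 𝕜 E = Fintype.card ι) {f : ι → E} (hf : Pairwise fun i j => ⟪f i, f j⟫_𝕜 = 0)
    {i : ι} (hi : f i ≠ 0) (y : E) :
    ⟪y, InnerProductSpace.gramSchmidtOrthonormalBasis h f i⟫_𝕜 = 0 ↔ ⟪y, f i⟫_𝕜 = 0 := by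
  rw [InnerProductSpace.gramSchmidtOrthonormalBasis_apply_of_orthogonal h hf hi, inner_smul_right,
    mul_eq_zero, or_iff_right (by simpa using hi)]

end InnerProductSpace

theorem Submodule.exists_eq_span_singleton_of_finrank_eq_one {K V : Type*} [DivisionRing K]
    [AddCommGroup V] [Module K V] [FiniteDimensional K V] {p : Submodule K V}
    (h : finrank K p = 1) : ∃ x ≠ 0, p = K ∙ x := by
  obtain ⟨x, hx, hx0⟩ := p.exists_mem_ne_zero_of_ne_bot (by rintro rfl; simp at h)
  exact ⟨x, hx0, (Submodule.eq_of_le_of_finrank_eq ((span_singleton_le_iff_mem _ _).2 hx)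
    (by rw [h, finrank_span_singleton hx0])).symm⟩

section FaithfulOrthRep

variable {V : Type*} {G : SimpleGraph V} {d e : ℕ}

theorem HasFOR.exists_adj_iff_inner_eq_zero (h : HasFOR G d) :
    ∃ x : V → EuclideanSpace ℂ (Fin d), ∀ u v, G.Adj u v ↔ ⟪x u, x v⟫ = 0 := by
  obtain ⟨φ, -, hrank, hadj⟩ := h
  choose x hx0 hφ using fun v => Submodule.exists_eq_span_singleton_of_finrank_eq_one (hrank v)
  refine ⟨x, fun u v => ?_⟩
  obtain rfl | huv := eq_or_ne u v
  · simp [hx0 u]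
  · rw [hadj u v huv, hφ u, hφ v, span_singleton_le_orthogonal_singleton_iff]

-- Vertices whose vectors span the same line have the same neighbourhood, so the lines are distinct.
theorem hasFOR_of_adj_iff_inner_eq_zero (hG : Function.Injective G.neighborSet)
    (x : V → EuclideanSpace ℂ (Fin d)) (hx : ∀ u v, G.Adj u v ↔ ⟪x u, x v⟫ = 0) :
    HasFOR G d := by
  have hx0 : ∀ v, x v ≠ 0 := fun v h => G.irrefl ((hx v v).2 (by simp [h]))
  refine ⟨fun v => ℂ ∙ x v, fun u v huv => hG ?_, fun v => finrank_span_singleton (hx0 v),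
    fun u v _ => by rw [hx, span_singleton_le_orthogonal_singleton_iff]⟩
  ext w
  simp only [SimpleGraph.mem_neighborSet, hx, inner_eq_zero_symm (x := x u),
    inner_eq_zero_symm (x := x v), ← span_singleton_le_orthogonal_singleton_iff, huv]

theorem IsFaithfulOrthRep.map {φ : V → Submodule ℂ (EuclideanSpace ℂ (Fin d))}
    (h : IsFaithfulOrthRep G d φ) (f : EuclideanSpace ℂ (Fin d) →ₗᵢ[ℂ] EuclideanSpace ℂ (Fin e)) :
    IsFaithfulOrthRep G e fun v => (φ v).map (f : _ →ₗ[ℂ] _) := by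
  obtain ⟨hinj, hrank, hadj⟩ := h
  refine ⟨(Submodule.map_injective_of_injective f.injective).comp hinj, fun v => ?_,
    fun u v huv => (hadj u v huv).trans ⟨Submodule.IsOrtho.map f, fun h' => ?_⟩⟩
  · rw [← hrank v]
    exact (Submodule.equivMapOfInjective _ f.injective (φ v)).finrank_eq.symm
  · intro a ha
    rw [Submodule.mem_orthogonal]
    intro b hb
    rw [← f.inner_map_map]
    exact (Submodule.mem_orthogonal _ _).1 (h' (Submodule.mem_map_of_mem ha)) _
      (Submodule.mem_map_of_mem hb)

theorem HasFOR.mono (h : HasFOR G d) (hde : d ≤ e) : HasFOR G e := by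
  obtain ⟨φ, hφ⟩ := h
  obtain ⟨f⟩ := exists_linearIsometry_of_finrank_le (𝕜 := ℂ)
    (E := EuclideanSpace ℂ (Fin d)) (F := EuclideanSpace ℂ (Fin e)) (by simpa using hde)
  exact ⟨_, IsFaithfulOrthRep.map hφ f⟩

theorem Xi_eq_of_hasFOR_of_not_hasFOR {n : ℕ} (h : HasFOR G (n + 1)) (h' : ¬ HasFOR G n) :
    Xi G = n + 1 :=
  le_antisymm (Nat.sInf_le h)
    (le_csInf ⟨_, h⟩ fun _ hd => Nat.succ_le_of_lt (lt_of_not_ge fun hdn => h' (hd.mono hdn)))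

end FaithfulOrthRep

theorem inner_toLp_intCast {ι : Type*} [Fintype ι] (a b : ι → ℤ) :
    ⟪WithLp.toLp 2 (fun k => (a k : ℂ)), WithLp.toLp 2 (fun k => (b k : ℂ))⟫ =
      ((a ⬝ᵥ b : ℤ) : ℂ) := by
  simp [PiLp.inner_apply, dotProduct, mul_comm]

-- Eliminating `d₀`, `d₁`, `d₂` leaves `d₃` times a sum of squared moduli, which the nonzero
-- diagonal entries `p₀`, `q₁`, `r₂` make positive.
theorem staircase_solution_eq_zero {p₀ p₃ q₀ q₁ q₃ r₁ r₂ r₃ s₂ s₃ d₀ d₁ d₂ d₃ : ℂ}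
    (hp₀ : p₀ ≠ 0) (hq₁ : q₁ ≠ 0) (hr₂ : r₂ ≠ 0) (hs₂ : s₂ ≠ 0)
    (hpq : q₀ * conj p₀ + q₃ * conj p₃ = 0) (hqr : r₁ * conj q₁ + r₃ * conj q₃ = 0)
    (hrs : s₂ * conj r₂ + s₃ * conj r₃ = 0)
    (hp : p₀ * d₀ + p₃ * d₃ = 0) (hq : q₀ * d₀ + q₁ * d₁ + q₃ * d₃ = 0)
    (hr : r₁ * d₁ + r₂ * d₂ + r₃ * d₃ = 0) (hs : s₂ * d₂ + s₃ * d₃ = 0) :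
    d₀ = 0 ∧ d₁ = 0 ∧ d₂ = 0 ∧ d₃ = 0 := by
  have h₂ : conj r₃ * d₂ = conj r₂ * d₃ := by
    refine mul_left_cancel₀ hs₂ ?_
    linear_combination conj r₃ * hs - d₃ * hrs
  have h₁ : p₀ * conj p₀ * q₁ * d₁ = -(p₀ * conj p₀ + p₃ * conj p₃) * q₃ * d₃ := by
    linear_combination p₀ * conj p₀ * hq - conj p₀ * q₀ * hp + p₃ * d₃ * hpq
  have h₃ : ((r₃ * conj r₃) * ((q₃ * conj q₃) * (p₀ * conj p₀ + p₃ * conj p₃)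
      + (p₀ * conj p₀) * (q₁ * conj q₁)) + (p₀ * conj p₀) * (q₁ * conj q₁) * (r₂ * conj r₂))
      * d₃ = 0 := by
    linear_combination conj r₃ * p₀ * conj p₀ * q₁ * conj q₁ * hr
      - conj r₃ * p₀ * conj p₀ * q₁ * d₁ * hqr + conj r₃ * r₃ * conj q₃ * h₁
      - p₀ * conj p₀ * q₁ * conj q₁ * r₂ * h₂
  simp only [Complex.mul_conj] at h₃
  have hpos : (0 : ℝ) < Complex.normSq r₃ * (Complex.normSq q₃ *
      (Complex.normSq p₀ + Complex.normSq p₃) + Complex.normSq p₀ * Complex.normSq q₁)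
      + Complex.normSq p₀ * Complex.normSq q₁ * Complex.normSq r₂ := by
    have := Complex.normSq_nonneg r₃
    have := Complex.normSq_nonneg q₃
    have := Complex.normSq_nonneg p₃
    have := Complex.normSq_pos.2 hp₀
    have := Complex.normSq_pos.2 hq₁
    have := Complex.normSq_pos.2 hr₂
    positivity
  obtain rfl : d₃ = 0 := (mul_eq_zero.1 h₃).resolve_left (by exact_mod_cast hpos.ne')
  obtain rfl : d₀ = 0 := by simpa [hp₀] using hp
  exact ⟨rfl, by simpa [hq₁] using hq, by simpa [hs₂] using hs, rfl⟩

def ci8Rep : ZMod 8 → Fin 5 → ℤ :=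
  ![![1, 0, 0, 0, 0], ![0, 0, 0, 0, 1], ![0, 0, 0, 1, 0], ![1, -2, -1, 0, 0],
    ![1, 0, 1, 0, -2], ![2, 1, 0, -1, 1], ![0, 0, 2, 1, 1], ![0, 2, -1, 2, 0]]

theorem ci8_injective_neighborSet : Function.Injective (Ci₈).neighborSet := by
  intro u v h
  have key : ∀ u v : ZMod 8, (∀ w, (Ci₈).Adj u w ↔ (Ci₈).Adj v w) → u = v := by decide
  exact key u v fun w => Set.ext_iff.1 h w

theorem hasFOR_ci8_five : HasFOR Ci₈ 5 := by
  refine hasFOR_of_adj_iff_inner_eq_zero ci8_injective_neighborSet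
    (fun v => WithLp.toLp 2 fun k => (ci8Rep v k : ℂ)) fun u v => ?_
  rw [inner_toLp_intCast, Int.cast_eq_zero]
  revert u v
  decide

theorem ci8_not_adj_iff_inner_eq_zero {E : Type*} [NormedAddCommGroup E]
    [InnerProductSpace ℂ E] [FiniteDimensional ℂ E] (hE : finrank ℂ E = 4) (x : ZMod 8 → E) :
    ¬ ∀ u v, (Ci₈).Adj u v ↔ ⟪x u, x v⟫ = 0 := by
  intro hx
  have nonorth : ∀ u v, ¬ (Ci₈).Adj u v → ⟪x u, x v⟫ ≠ 0 := fun u v => mt (hx u v).2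
  -- The dummy `0` in slot 3 lets Gram–Schmidt complete `x 0, x 1, x 2` to a basis.
  let f : Fin 4 → E := fun k => if k = 3 then 0 else x k.val
  have hf : Pairwise fun i j => ⟪f i, f j⟫ = 0 := by
    have key : ∀ i j : Fin 4, i ≠ j → i ≠ 3 → j ≠ 3 → (Ci₈).Adj i.val j.val := by decide
    intro i j hij
    simp only [f]
    split_ifs with hi hj hj
    · exact inner_zero_left _
    · exact inner_zero_left _
    · exact inner_zero_right _
    · exact (hx _ _).1 (key i j hij hi hj)
  let b := InnerProductSpace.gramSchmidtOrthonormalBasis (hE.trans (Fintype.card_fin 4).symm) f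
  have coord : ∀ k : Fin 4, k ≠ 3 → ∀ j : ZMod 8, ⟪x j, b k⟫ = 0 ↔ (Ci₈).Adj j k.val := by
    intro k hk j
    have hfk : f k = x k.val := if_neg hk
    rw [inner_gramSchmidtOrthonormalBasis_eq_zero_iff _ hf (hfk ▸ fun h => nonorth _ _
      (SimpleGraph.irrefl _) (by rw [h, inner_zero_left])), hfk, hx]
  have parseval : ∀ u v, (Ci₈).Adj u v → ∑ k, ⟪x u, b k⟫ * conj ⟪x v, b k⟫ = 0 := by
    intro u v huv
    simp only [inner_conj_symm, b.sum_inner_mul_inner]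
    exact (hx u v).1 huv
  have h34 := parseval 4 3 (by decide)
  have h46 := parseval 6 4 (by decide)
  have h67 := parseval 7 6 (by decide)
  have h35 := parseval 3 5 (by decide)
  have h45 := parseval 4 5 (by decide)
  have h65 := parseval 6 5 (by decide)
  have h75 := parseval 7 5 (by decide)
  simp only [Fin.sum_univ_four, (coord 1 (by decide) 3).2 (by decide),
    (coord 2 (by decide) 3).2 (by decide), (coord 2 (by decide) 4).2 (by decide),
    (coord 0 (by decide) 6).2 (by decide), (coord 0 (by decide) 7).2 (by decide),
    (coord 1 (by decide) 7).2 (by decide), map_zero, mul_zero, zero_mul, add_zero, zero_add]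
    at h34 h46 h67 h35 h45 h65 h75
  obtain ⟨h₀, h₁, h₂, h₃⟩ := staircase_solution_eq_zero (mt (coord 0 (by decide) 3).1 (by decide))
    (mt (coord 1 (by decide) 4).1 (by decide)) (mt (coord 2 (by decide) 6).1 (by decide))
    (mt (coord 2 (by decide) 7).1 (by decide)) h34 h46 h67 h35 h45 h65 h75
  refine nonorth 5 5 (SimpleGraph.irrefl _) ?_
  rw [← b.sum_inner_mul_inner, Fin.sum_univ_four]
  simp only [← inner_conj_symm (b _) (x 5), h₀, h₁, h₂, h₃, mul_zero, add_zero]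

theorem not_hasFOR_ci8_four : ¬ HasFOR Ci₈ 4 := fun h =>
  let ⟨x, hx⟩ := h.exists_adj_iff_inner_eq_zero
  ci8_not_adj_iff_inner_eq_zero (by simp) x hx

/-- The circulant graph `Ci₈(1,2)` on `ℤ/8ℤ` with connection set `{±1, ±2}`
satisfies `Ξ(Ci₈(1,2)) = 5`: it admits a faithful orthogonal representation in `ℂ⁵` but
none in `ℂ⁴`. -/
theorem stmt18 :
    Xi (SimpleGraph.circulantGraph ({1, 2} : Set (ZMod 8))) = 5 ∧
    HasFOR (SimpleGraph.circulantGraph ({1, 2} : Set (ZMod 8))) 5 ∧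
    ¬ HasFOR (SimpleGraph.circulantGraph ({1, 2} : Set (ZMod 8))) 4 :=
  ⟨Xi_eq_of_hasFOR_of_not_hasFOR hasFOR_ci8_five not_hasFOR_ci8_four, hasFOR_ci8_five,
    not_hasFOR_ci8_four⟩
end
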